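/- arXiv:1908.10786 — 2 statements merged into one kernel-verified Lean document; each statement's English description precedes it below -/
import Mathlib

section
/- Let W be a standard d-dimensional Brownian motion, (𝕋ₙ) a balanced sequence of partitions of [r,T] with constant c_𝕋, and ₙW := Lₙ(W) the delayed piecewise-linear (adapted, one-step-delayed) interpolation of W along 𝕋ₙ. Let Z ∼ 𝒩(0, I_d) and ŵ_{p,q} := E[|Z|^{pq}] c_𝕋^{pq}. Then for all p ≥ 1, q > 0, all n ∈ ℕ, and all r ≤ s ≤ t ≤ T: E[ (∫_s^t |ₙẆ_u|^q du)^p ] ≤ ŵ_{p,q} |𝕋ₙ|^{−pq/2} (t−s)^p. -/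
open MeasureTheory ProbabilityTheory Filter Set ENNReal

noncomputable section

abbrev Vec (m : ℕ) := EuclideanSpace ℝ (Fin m)
abbrev Mat (m d : ℕ) := EuclideanSpace ℝ (Fin m × Fin d)

def matVec {m d : ℕ} (A : Mat m d) (v : Vec d) : Vec m :=
  (EuclideanSpace.equiv (Fin m) ℝ).symm fun k => ∑ l, A (k, l) * v l

/-- Path stopped at time `s`. -/
def stopAt {E : Type*} (x : ℝ → E) (s : ℝ) : ℝ → E := fun u => x (min u s)

/-- Sup norm over `[0,T]`. -/
def supNorm {E : Type*} [NormedAddCommGroup E] (T : ℝ) (x : ℝ → E) : ℝ :=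
  ⨆ u : Icc (0:ℝ) T, ‖x u‖

def esupNorm {E : Type*} [NormedAddCommGroup E] (T : ℝ) (x : ℝ → E) : ℝ≥0∞ :=
  ⨆ u : Icc (0:ℝ) T, (‖x u‖₊ : ℝ≥0∞)

/-- The pseudometric `d_∞((t,x),(s,y)) = |t-s|^{1/2} + ‖x^t - y^s‖_∞`. -/
def dInfty {E : Type*} [NormedAddCommGroup E] (T t : ℝ) (x : ℝ → E) (s : ℝ) (y : ℝ → E) : ℝ :=
  |t - s| ^ (1/2 : ℝ) + supNorm T (fun u => stopAt x t u - stopAt y s u)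

/-- Delayed α-Hölder norm on `[0,T]` with Hölder seminorm over `[r,T]`. -/
def holderNorm {E : Type*} [NormedAddCommGroup E] (α r T : ℝ) (x : ℝ → E) : ℝ :=
  supNorm T (stopAt x r) +
    ⨆ p : {q : Icc r T × Icc r T // (q.1 : ℝ) ≠ (q.2 : ℝ)},
      ‖x p.1.1 - x p.1.2‖ / |(p.1.1 : ℝ) - (p.1.2 : ℝ)| ^ α

def eholderNorm {E : Type*} [NormedAddCommGroup E] (α r T : ℝ) (x : ℝ → E) : ℝ≥0∞ :=
  esupNorm T (stopAt x r) +
    ⨆ (s : Icc r T) (t : Icc r T) (_ : (s : ℝ) ≠ (t : ℝ)),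
      (‖x s - x t‖₊ : ℝ≥0∞) / ENNReal.ofReal (|(s : ℝ) - (t : ℝ)| ^ α)

/-- A sequence of partitions of `[r,T]`. -/
structure PartitionSeq (r T : ℝ) where
  k : ℕ → ℕ
  t : ℕ → ℕ → ℝ
  k_pos : ∀ n, 0 < k n
  left : ∀ n, t n 0 = r
  right : ∀ n, t n (k n) = T
  mono : ∀ n, ∀ i < k n, t n i < t n (i + 1)

def PartitionSeq.mesh {r T : ℝ} (P : PartitionSeq r T) (n : ℕ) : ℝ :=
  (Finset.range (P.k n)).sup' (Finset.nonempty_range_iff.mpr (P.k_pos n).ne')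
    (fun i => P.t n (i + 1) - P.t n i)

/-- Balanced sequence of partitions with constant `c`. -/
def PartitionSeq.Balanced {r T : ℝ} (P : PartitionSeq r T) (c : ℝ) : Prop :=
  ∀ n, ∀ i < P.k n, P.mesh n ≤ c * (P.t n (i + 1) - P.t n i)

open Classical in
/-- Greatest index `i ≤ kₙ` with `t_{i,n} < u`. -/
def PartitionSeq.idxLt {r T : ℝ} (P : PartitionSeq r T) (n : ℕ) (u : ℝ) : ℕ :=
  Nat.findGreatest (fun i => P.t n i < u) (P.k n)

open Classical in
/-- Greatest index `i ≤ kₙ - 1` with `t_{i,n} ≤ u`. -/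
def PartitionSeq.idxLe {r T : ℝ} (P : PartitionSeq r T) (n : ℕ) (u : ℝ) : ℕ :=
  Nat.findGreatest (fun i => P.t n i ≤ u) (P.k n - 1)

/-- `uₙ`, the partition point below `u`. -/
def PartitionSeq.below {r T : ℝ} (P : PartitionSeq r T) (n : ℕ) (u : ℝ) : ℝ :=
  P.t n (P.idxLe n u)

/-- `u̲ₙ`, the predecessor of the partition point below `u`. -/
def PartitionSeq.pred {r T : ℝ} (P : PartitionSeq r T) (n : ℕ) (u : ℝ) : ℝ :=
  P.t n (P.idxLe n u - 1)

/-- `γₙ(u) = Δuₙ / Δūₙ`. -/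
def PartitionSeq.gamma {r T : ℝ} (P : PartitionSeq r T) (n : ℕ) (u : ℝ) : ℝ :=
  (P.t n (P.idxLe n u) - P.t n (P.idxLe n u - 1)) /
    (P.t n (P.idxLe n u + 1) - P.t n (P.idxLe n u))

/-- Delayed piecewise-linear interpolation along the `n`-th partition. -/
def PartitionSeq.interp {r T : ℝ} (P : PartitionSeq r T) (n : ℕ) {E : Type*}
    [NormedAddCommGroup E] [NormedSpace ℝ E] (x : ℝ → E) (u : ℝ) : E :=
  if u ≤ P.t n 1 then x (min u r)
  else x (P.t n (P.idxLt n u - 1)) +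
    ((u - P.t n (P.idxLt n u)) / (P.t n (P.idxLt n u + 1) - P.t n (P.idxLt n u))) •
      (x (P.t n (P.idxLt n u)) - x (P.t n (P.idxLt n u - 1)))

/-- Piecewise-constant derivative of the delayed linear interpolation. -/
def PartitionSeq.interpDeriv {r T : ℝ} (P : PartitionSeq r T) (n : ℕ) {E : Type*}
    [NormedAddCommGroup E] [NormedSpace ℝ E] (x : ℝ → E) (u : ℝ) : E :=
  if u ≤ P.t n 1 then 0
  else (P.t n (P.idxLt n u + 1) - P.t n (P.idxLt n u))⁻¹ •
    (x (P.t n (P.idxLt n u)) - x (P.t n (P.idxLt n u - 1)))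

/-- Standard d-dimensional Brownian motion. -/
def IsBrownianMotion {Ω : Type*} [MeasurableSpace Ω] {d : ℕ}
    (μ : Measure Ω) (W : ℝ → Ω → Vec d) : Prop :=
  (∀ ω, Continuous fun u => W u ω) ∧ (∀ᵐ ω ∂μ, W 0 ω = 0) ∧
  (∀ (N : ℕ) (τ : ℕ → ℝ), Monotone τ → (∀ i, 0 ≤ τ i) →
    iIndepFun
      (fun p : Fin N × Fin d => fun ω => W (τ (p.1 + 1)) ω p.2 - W (τ p.1) ω p.2) μ) ∧
  (∀ s u : ℝ, 0 ≤ s → s ≤ u → ∀ l : Fin d,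
    Measure.map (fun ω => W u ω l - W s ω l) μ = gaussianReal 0 (Real.toNNReal (u - s)))

/-- Brownian motion with respect to a filtration. -/
def IsFilteredBM {Ω : Type*} [mΩ : MeasurableSpace Ω] {d : ℕ} (μ : Measure Ω)
    (F : Filtration ℝ mΩ) (W : ℝ → Ω → Vec d) : Prop :=
  IsBrownianMotion μ W ∧ Adapted F W ∧
  ∀ s u : ℝ, 0 ≤ s → s ≤ u →
    Indep (MeasurableSpace.comap (fun ω => W u ω - W s ω) inferInstance) (F s) μ

/-- Riemann sum for a stochastic integral. -/
def riemannSum {Ω : Type*} {m d : ℕ} (W : ℝ → Ω → Vec d) (X : ℝ → Ω → Mat m d)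
    (τ : ℕ → ℝ) (K : ℕ) (ω : Ω) : Vec m :=
  ∑ i ∈ Finset.range K, matVec (X (τ i) ω) (W (τ (i + 1)) ω - W (τ i) ω)

/-- `I` is the Itô integral `∫_a^b X dW`: left-point Riemann sums along any sequence of
partitions of `[a,b]` with vanishing mesh converge to `I` in measure (in probability). -/
def IsItoIntegral {Ω : Type*} [MeasurableSpace Ω] {m d : ℕ} (μ : Measure Ω)
    (W : ℝ → Ω → Vec d) (X : ℝ → Ω → Mat m d) (a b : ℝ) (I : Ω → Vec m) : Prop :=
  ∀ (τ : ℕ → ℕ → ℝ) (K : ℕ → ℕ),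
    (∀ n, 0 < K n ∧ τ n 0 = a ∧ τ n (K n) = b ∧ ∀ i < K n, τ n i < τ n (i + 1)) →
    Tendsto (fun n => ⨆ i : Fin (K n), (τ n (i + 1) - τ n i)) atTop (nhds 0) →
    TendstoInMeasure μ (fun n ω => riemannSum W X (τ n) (K n) ω) atTop I

/-- Vertical perturbation of a path at time `s`. -/
def vertShift {E : Type*} [Add E] (x : ℝ → E) (s : ℝ) (h : E) : ℝ → E :=
  fun u => if s ≤ u then x u + h else x u

/-- Vertical (Dupire) derivative of a non-anticipative functional. -/
def HasVertDerivAt {E F : Type*} [NormedAddCommGroup E] [NormedSpace ℝ E]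
    [NormedAddCommGroup F] [NormedSpace ℝ F]
    (G : ℝ → (ℝ → E) → F) (s : ℝ) (x : ℝ → E) (D : E →L[ℝ] F) : Prop :=
  HasFDerivAt (fun h : E => G s (vertShift x s h)) D 0

/-- Horizontal derivative of a non-anticipative functional. -/
def HasHorizDerivAt {E F : Type*} [NormedAddCommGroup E]
    [NormedAddCommGroup F] [NormedSpace ℝ F]
    (G : ℝ → (ℝ → E) → F) (s : ℝ) (x : ℝ → E) (D : F) : Prop :=
  HasDerivWithinAt (fun u => G u (stopAt x s)) D (Ici s) s

/-- Càdlàg path on `ℝ`. -/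
def Cadlag {E : Type*} [TopologicalSpace E] (x : ℝ → E) : Prop :=
  (∀ u, ContinuousWithinAt x (Ici u) u) ∧ ∀ u, ∃ L, Tendsto x (nhdsWithin u (Iio u)) (nhds L)

/-- `d_∞`-continuity of a functional on `[r,t₀) × D`. -/
def DInftyContinuous {E F : Type*} [NormedAddCommGroup E] [NormedAddCommGroup F]
    (r t₀ T : ℝ) (G : ℝ → (ℝ → E) → F) : Prop :=
  ∀ s ∈ Ico r t₀, ∀ x : ℝ → E, Cadlag x → ∀ ε > 0, ∃ δ > 0,
    ∀ u ∈ Ico r t₀, ∀ y : ℝ → E, Cadlag y → dInfty T u y s x < δ → ‖G u y - G s x‖ < ε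

/-- Bounded on bounded sets. -/
def BddOnBounded {E F : Type*} [NormedAddCommGroup E] [NormedAddCommGroup F]
    (r t₀ T : ℝ) (G : ℝ → (ℝ → E) → F) : Prop :=
  ∀ R > 0, ∃ C, ∀ s ∈ Ico r t₀, ∀ x : ℝ → E, Cadlag x → supNorm T x ≤ R → ‖G s x‖ ≤ C

/-- The correction term `ρ` built from the vertical derivative of `σ`. -/
def corrTerm {m d : ℕ} (σ : ℝ → ℝ → (ℝ → Vec m) → Mat m d)
    (σx : ℝ → ℝ → (ℝ → Vec m) → (Vec m →L[ℝ] Mat m d))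
    (t s : ℝ) (x : ℝ → Vec m) : Vec m :=
  if s < t then
    (EuclideanSpace.equiv (Fin m) ℝ).symm fun k =>
      ∑ l, (σx t s x ((EuclideanSpace.equiv (Fin m) ℝ).symm fun k' => σ s s x (k', l))) (k, l)
  else 0


/-- Delayed Sobolev norm `‖x‖_{1,p,r}` computed from a choice `x'` of weak derivative. -/
def sobNorm {E : Type*} [NormedAddCommGroup E] (p r T : ℝ) (x x' : ℝ → E) : ℝ :=
  supNorm T (stopAt x r) + (∫ s in Icc r T, ‖x' s‖ ^ p) ^ (1/p)

/-- Membership in the delayed Sobolev space `W_r^{1,p}([0,T],E)`, witnessed by the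
weak derivative `x'`. -/
def IsW1p {E : Type*} [NormedAddCommGroup E] [NormedSpace ℝ E] (p r T : ℝ)
    (x x' : ℝ → E) : Prop :=
  ContinuousOn x (Icc 0 T) ∧ IntervalIntegrable x' MeasureTheory.volume r T ∧
  (∀ t ∈ Icc r T, x t = x r + ∫ s in r..t, x' s) ∧
  MeasureTheory.IntegrableOn (fun s => ‖x' s‖ ^ p) (Icc r T) MeasureTheory.volume

/-- Solution of a path-dependent stochastic Volterra integral equation on `[r,T]` with
(possibly `ω`-dependent) drift `drift` and diffusion `Sig`; `S t` is the Itô integral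
`∫_r^t Sig(t,s,·) dW_s`. -/
def SolvesSVIE {m d : ℕ} {Ω : Type*} [MeasurableSpace Ω] (μ : Measure Ω)
    (W : ℝ → Ω → Vec d) (r T : ℝ)
    (drift : ℝ → ℝ → Ω → Vec m) (Sig : ℝ → ℝ → Ω → Mat m d)
    (Y : ℝ → Ω → Vec m) (S : ℝ → Ω → Vec m) : Prop :=
  (∀ ω, Continuous fun u => Y u ω) ∧
  (∀ t ∈ Icc r T, ∀ᵐ ω ∂μ, MeasureTheory.IntegrableOn (fun s => drift t s ω) (Ioc r t)) ∧
  (∀ t ∈ Icc r T, IsItoIntegral μ W (fun s => Sig t s) r t (S t)) ∧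
  (∀ t ∈ Icc r T, ∀ᵐ ω ∂μ, Y t ω = Y r ω + (∫ s in Ioc r t, drift t s ω) + S t ω)

/-- σ-algebra generated by `ξ` stopped at `r` up to time `t` and the increments of `W`
after time `r` up to time `t` (generating the filtration used for strong solutions). -/
def naturalSigma {m d : ℕ} {Ω : Type*} [MeasurableSpace Ω]
    (ξ : ℝ → Ω → Vec m) (W : ℝ → Ω → Vec d) (r t : ℝ) : MeasurableSpace Ω :=
  (⨆ s ∈ Icc (0:ℝ) t, MeasurableSpace.comap (fun ω => ξ (min s r) ω) inferInstance) ⊔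
  (⨆ s ∈ Icc r (max r t), MeasurableSpace.comap (fun ω => W s ω - W r ω) inferInstance)

/-- `x` solves the deterministic Volterra integral equation
`x(t) = x(r) + ∫_r^t (b - ρ/2)(t,s,x) ds + ∫_r^t σ(t,s,x) dh(s)` on `[r,T]` with initial
condition `x^r = x̂^r`, where `h` has weak derivative `h'`. -/
def SolvesSupportVIE {m d : ℕ} (r T : ℝ)
    (b : ℝ → ℝ → (ℝ → Vec m) → Vec m)
    (σ : ℝ → ℝ → (ℝ → Vec m) → Mat m d)
    (σx : ℝ → ℝ → (ℝ → Vec m) → (Vec m →L[ℝ] Mat m d))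
    (xhat : ℝ → Vec m) (h' : ℝ → Vec d) (x : ℝ → Vec m) : Prop :=
  ContinuousOn x (Icc 0 T) ∧ (∀ u ∈ Icc 0 r, x u = xhat u) ∧
  (∀ t ∈ Icc r T, MeasureTheory.IntegrableOn
    (fun s => b t s x - (1/2 : ℝ) • corrTerm σ σx t s x + matVec (σ t s x) (h' s)) (Ioc r t)) ∧
  (∀ t ∈ Icc r T, x t = x r +
    ∫ s in Ioc r t, (b t s x - (1/2 : ℝ) • corrTerm σ σx t s x + matVec (σ t s x) (h' s)))

/-- The extension `ρ̄` of the correction term to the closed triangle `s ≤ t`. -/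
def corrTermBar {m d : ℕ} (σ : ℝ → ℝ → (ℝ → Vec m) → Mat m d)
    (σx : ℝ → ℝ → (ℝ → Vec m) → (Vec m →L[ℝ] Mat m d))
    (t s : ℝ) (x : ℝ → Vec m) : Vec m :=
  if s ≤ t then
    (EuclideanSpace.equiv (Fin m) ℝ).symm fun k =>
      ∑ l, (σx t s x ((EuclideanSpace.equiv (Fin m) ℝ).symm fun k' => σ s s x (k', l))) (k, l)
  else 0

/-- The weak derivative `∂_t ρ̄` of the extended correction term in its first variable,
built from `∂_t ∂_x σ`. -/
def corrTermBarT {m d : ℕ} (σ : ℝ → ℝ → (ℝ → Vec m) → Mat m d)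
    (σxt : ℝ → ℝ → (ℝ → Vec m) → (Vec m →L[ℝ] Mat m d))
    (t s : ℝ) (x : ℝ → Vec m) : Vec m :=
  if s ≤ t then
    (EuclideanSpace.equiv (Fin m) ℝ).symm fun k =>
      ∑ l, (σxt t s x ((EuclideanSpace.equiv (Fin m) ℝ).symm fun k' => σ s s x (k', l))) (k, l)
  else 0

end

/-! On `(t_i, t_{i+1}]` the derivative of the delayed interpolation is the constant
`(W_{t_i} - W_{t_{i-1}}) / Δt_{i+1}`, so `∫_s^t |ₙẆ_u|^q du` is a combination of these constants
with weights of total mass at most `t - s`. Hölder's inequality moves the `p`-th power inside the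
sum at the cost of `(t - s)^{p-1}`. Each increment has the law of `√Δt_i Z` with `Δt_i ≤ |𝕋ₙ|`,
and balance gives `Δt_{i+1}⁻¹ ≤ c_𝕋 / |𝕋ₙ|`. -/

section Integration

variable {α ι : Type*} [MeasurableSpace α] {ν : Measure α}

theorem lintegral_le_sum_measure_mul_of_ae_le {f : α → ℝ≥0∞} {s : Finset ι} {A : ι → Set α}
    {c : ι → ℝ≥0∞} (hA : ∀ i ∈ s, MeasurableSet (A i))
    (hf : ∀ᵐ x ∂ν, ∃ i ∈ s, x ∈ A i ∧ f x ≤ c i) :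
    ∫⁻ x, f x ∂ν ≤ ∑ i ∈ s, ν (A i) * c i := by
  calc ∫⁻ x, f x ∂ν ≤ ∫⁻ x, ∑ i ∈ s, (A i).indicator (fun _ => c i) x ∂ν := by
        refine lintegral_mono_ae (hf.mono fun x ⟨i, hi, hx, hfx⟩ => ?_)
        calc f x ≤ (A i).indicator (fun _ => c i) x := by rwa [indicator_of_mem hx]
          _ ≤ _ := Finset.single_le_sum (f := fun j => (A j).indicator (fun _ => c j) x)
              (fun _ _ => zero_le) hi
    _ = ∑ i ∈ s, ν (A i) * c i := by
        rw [lintegral_finsetSum _ fun i hi => measurable_const.indicator (hA i hi)]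
        exact Finset.sum_congr rfl fun i hi => by
          rw [lintegral_indicator_const (hA i hi), mul_comm]

theorem lintegral_rpow_sum_mul_le {s : Finset ι} (w : ι → ℝ≥0∞) {B : ι → α → ℝ≥0∞}
    (hB : ∀ i ∈ s, AEMeasurable (B i) ν) {p : ℝ} (hp : 1 ≤ p) {C : ℝ≥0∞}
    (hC : ∀ i ∈ s, ∫⁻ x, B i x ^ p ∂ν ≤ C) :
    ∫⁻ x, (∑ i ∈ s, w i * B i x) ^ p ∂ν ≤ (∑ i ∈ s, w i) ^ p * C := by
  have hp0 : 0 < p := zero_lt_one.trans_le hp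
  have holder : ∀ x, (∑ i ∈ s, w i * B i x) ^ p
      ≤ (∑ i ∈ s, w i) ^ (p - 1) * ∑ i ∈ s, w i * B i x ^ p := fun x => by
    calc (∑ i ∈ s, w i * B i x) ^ p
        ≤ ((∑ i ∈ s, w i) ^ (1 - p⁻¹) * (∑ i ∈ s, w i * B i x ^ p) ^ p⁻¹) ^ p :=
          ENNReal.rpow_le_rpow (ENNReal.inner_le_weight_mul_Lp_of_nonneg s hp _ _) hp0.le
      _ = _ := by
          rw [ENNReal.mul_rpow_of_nonneg _ _ hp0.le, ← ENNReal.rpow_mul, ← ENNReal.rpow_mul,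
            inv_mul_cancel₀ hp0.ne', ENNReal.rpow_one, sub_mul, one_mul, inv_mul_cancel₀ hp0.ne']
  calc ∫⁻ x, (∑ i ∈ s, w i * B i x) ^ p ∂ν
      ≤ ∫⁻ x, (∑ i ∈ s, w i) ^ (p - 1) * ∑ i ∈ s, w i * B i x ^ p ∂ν := lintegral_mono holder
    _ = (∑ i ∈ s, w i) ^ (p - 1) * ∑ i ∈ s, w i * ∫⁻ x, B i x ^ p ∂ν := by
        have hBp : ∀ i ∈ s, AEMeasurable (fun x => B i x ^ p) ν := fun i hi =>
          (hB i hi).pow_const p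
        rw [lintegral_const_mul'' _
            (Finset.aemeasurable_fun_sum _ fun i hi => (hBp i hi).const_mul _),
          lintegral_finsetSum' _ fun i hi => (hBp i hi).const_mul _]
        exact congrArg _ (Finset.sum_congr rfl fun i hi => lintegral_const_mul'' _ (hBp i hi))
    _ ≤ (∑ i ∈ s, w i) ^ (p - 1) * ∑ i ∈ s, w i * C := by gcongr with i hi; exact hC i hi
    _ = (∑ i ∈ s, w i) ^ p * C := by
        conv_rhs => rw [← sub_add_cancel p 1,
          ENNReal.rpow_add_of_nonneg _ _ (by linarith) zero_le_one, ENNReal.rpow_one]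
        rw [← Finset.sum_mul, mul_assoc]

end Integration

section Gaussian

variable {ι Ω Ω' : Type*} [Fintype ι] [MeasurableSpace Ω] [MeasurableSpace Ω']
  {μ : Measure Ω} {μ' : Measure Ω'}

theorem map_ofLp_eq_pi_of_iIndepFun [IsProbabilityMeasure μ] {X : Ω → EuclideanSpace ℝ ι}
    {v : NNReal} (hind : iIndepFun (fun l ω => X ω l) μ)
    (hlaw : ∀ l, μ.map (fun ω => X ω l) = gaussianReal 0 v) :
    μ.map (fun ω => WithLp.ofLp (X ω)) = Measure.pi fun _ => gaussianReal 0 v := by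
  have hmeas : ∀ l, AEMeasurable (fun ω => X ω l) μ := fun l =>
    aemeasurable_of_map_neZero (by rw [hlaw l]; infer_instance)
  rw [← funext hlaw]
  exact (iIndepFun_iff_map_fun_eq_pi_map hmeas).1 hind

theorem pi_gaussianReal_eq_map_smul (v : NNReal) :
    (Measure.pi fun _ : ι => gaussianReal 0 v) =
      (Measure.pi fun _ : ι => gaussianReal 0 1).map (Real.sqrt v • ·) := by
  have hsmul : (Real.sqrt v • · : (ι → ℝ) → ι → ℝ) = fun x l => Real.sqrt v * x l := rfl
  rw [hsmul, Measure.pi_map_pi fun _ => (measurable_const_mul _).aemeasurable]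
  congr! with l
  rw [gaussianReal_map_const_mul, mul_zero, mul_one]
  congr
  ext
  simp

theorem lintegral_enorm_rpow_eq_of_map_ofLp_eq_pi {X : Ω → EuclideanSpace ℝ ι}
    {Z : Ω' → EuclideanSpace ℝ ι} {v : NNReal}
    (hX : μ.map (fun ω => WithLp.ofLp (X ω)) = Measure.pi fun _ => gaussianReal 0 v)
    (hZ : μ'.map (fun ω' => WithLp.ofLp (Z ω')) = Measure.pi fun _ => gaussianReal 0 1)
    {e : ℝ} (he : 0 ≤ e) :
    ∫⁻ ω, ‖X ω‖ₑ ^ e ∂μ = (v : ℝ≥0∞) ^ (e / 2) * ∫⁻ ω', ‖Z ω'‖ₑ ^ e ∂μ' := by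
  set G : (ι → ℝ) → ℝ≥0∞ := fun x => ‖WithLp.toLp 2 x‖ₑ ^ e
  have hG : Measurable G := by fun_prop
  have hXm : AEMeasurable (fun ω => WithLp.ofLp (X ω)) μ :=
    aemeasurable_of_map_neZero (by rw [hX]; infer_instance)
  have hZm : AEMeasurable (fun ω' => WithLp.ofLp (Z ω')) μ' :=
    aemeasurable_of_map_neZero (by rw [hZ]; infer_instance)
  have hsqrt : ‖Real.sqrt v‖ₑ ^ e = (v : ℝ≥0∞) ^ (e / 2) := by
    rw [Real.enorm_of_nonneg (Real.sqrt_nonneg _), Real.sqrt_eq_rpow,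
      ← ENNReal.ofReal_rpow_of_nonneg v.coe_nonneg one_half_pos.le, ← ENNReal.rpow_mul,
      ENNReal.ofReal_coe_nnreal, one_div_mul_eq_div]
  calc ∫⁻ ω, ‖X ω‖ₑ ^ e ∂μ
      = ∫⁻ x, G x ∂(Measure.pi fun _ => gaussianReal 0 v) := by
        rw [← hX, lintegral_map' hG.aemeasurable hXm]
    _ = ∫⁻ x, G (Real.sqrt v • x) ∂(Measure.pi fun _ => gaussianReal 0 1) := by
        rw [pi_gaussianReal_eq_map_smul, lintegral_map hG (measurable_const_smul _)]
    _ = (v : ℝ≥0∞) ^ (e / 2) * ∫⁻ x, G x ∂(Measure.pi fun _ => gaussianReal 0 1) := by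
        simp only [G, WithLp.toLp_smul, enorm_smul,
          ENNReal.mul_rpow_of_nonneg _ _ he, hsqrt]
        exact lintegral_const_mul' _ _
          (ENNReal.rpow_ne_top_of_nonneg (by positivity) ENNReal.coe_ne_top)
    _ = (v : ℝ≥0∞) ^ (e / 2) * ∫⁻ ω', ‖Z ω'‖ₑ ^ e ∂μ' := by
        rw [← hZ, lintegral_map' hG.aemeasurable hZm]

end Gaussian

namespace IsBrownianMotion

variable {Ω Ω' : Type*} [MeasurableSpace Ω] [MeasurableSpace Ω'] {μ : Measure Ω}
  {μ' : Measure Ω'} {d : ℕ} {W : ℝ → Ω → Vec d} {a b : ℝ}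

theorem iIndepFun_increment (hW : IsBrownianMotion μ W) (ha : 0 ≤ a) (hab : a ≤ b) :
    iIndepFun (fun l ω => (W b ω - W a ω) l) μ := by
  have hτ : Monotone fun j : ℕ => if j = 0 then a else b := by
    intro i j hij
    dsimp only
    split_ifs <;> first | rfl | exact hab | omega
  have hind := (hW.2.2.1 1 _ hτ fun j => by split_ifs <;> linarith).precomp
    (Prod.mk_right_injective (0 : Fin 1))
  simpa using hind

theorem map_increment_apply (hW : IsBrownianMotion μ W) (ha : 0 ≤ a) (hab : a ≤ b) (l : Fin d) :
    μ.map (fun ω => (W b ω - W a ω) l) = gaussianReal 0 (b - a).toNNReal := by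
  simpa using hW.2.2.2 a b ha hab l

theorem aemeasurable_increment (hW : IsBrownianMotion μ W) (ha : 0 ≤ a) (hab : a ≤ b) :
    AEMeasurable (fun ω => W b ω - W a ω) μ := by
  have hcoord : AEMeasurable (fun ω => WithLp.ofLp (W b ω - W a ω)) μ :=
    aemeasurable_pi_lambda _ fun l =>
      aemeasurable_of_map_neZero (by rw [hW.map_increment_apply ha hab l]; infer_instance)
  exact (WithLp.measurable_toLp 2 _).comp_aemeasurable hcoord

theorem lintegral_enorm_increment_rpow [IsProbabilityMeasure μ] [IsProbabilityMeasure μ']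
    (hW : IsBrownianMotion μ W) (ha : 0 ≤ a) (hab : a ≤ b) {Z : Ω' → Vec d}
    (hZind : iIndepFun (fun l ω' => Z ω' l) μ')
    (hZlaw : ∀ l, μ'.map (fun ω' => Z ω' l) = gaussianReal 0 1) {e : ℝ} (he : 0 ≤ e) :
    ∫⁻ ω, ‖W b ω - W a ω‖ₑ ^ e ∂μ = ENNReal.ofReal (b - a) ^ (e / 2) * ∫⁻ ω', ‖Z ω'‖ₑ ^ e ∂μ' :=
  lintegral_enorm_rpow_eq_of_map_ofLp_eq_pi
    (map_ofLp_eq_pi_of_iIndepFun (hW.iIndepFun_increment ha hab) (hW.map_increment_apply ha hab))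
    (map_ofLp_eq_pi_of_iIndepFun hZind hZlaw) he

end IsBrownianMotion

namespace PartitionSeq

variable {r T : ℝ} (P : PartitionSeq r T) (n : ℕ)

theorem monotone_t_min : Monotone fun j => P.t n (min j (P.k n)) := by
  refine monotone_nat_of_le_succ fun j => ?_
  rcases lt_or_ge j (P.k n) with hj | hj
  · rw [min_eq_left hj.le, min_eq_left hj]
    exact (P.mono n j hj).le
  · rw [min_eq_right hj, min_eq_right (hj.trans j.le_succ)]

variable {n}

theorem t_le_t {i j : ℕ} (hij : i ≤ j) (hj : j ≤ P.k n) : P.t n i ≤ P.t n j := by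
  simpa [min_eq_left hj, min_eq_left (hij.trans hj)] using P.monotone_t_min n hij

theorem t_nonneg (hr : 0 ≤ r) {i : ℕ} (hi : i ≤ P.k n) : 0 ≤ P.t n i :=
  hr.trans (by simpa [P.left] using P.t_le_t (Nat.zero_le i) hi)

theorem t_pred_le {i : ℕ} (hi : i ≤ P.k n) : P.t n (i - 1) ≤ P.t n i :=
  P.t_le_t (Nat.sub_le i 1) hi

theorem gap_pos {i : ℕ} (hi : i < P.k n) : 0 < P.t n (i + 1) - P.t n i :=
  sub_pos.2 (P.mono n i hi)

theorem gap_le_mesh {i : ℕ} (hi : i < P.k n) : P.t n (i + 1) - P.t n i ≤ P.mesh n :=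
  Finset.le_sup' (fun i => P.t n (i + 1) - P.t n i) (Finset.mem_range.2 hi)

variable (n) in
theorem mesh_pos : 0 < P.mesh n :=
  (P.gap_pos (P.k_pos n)).trans_le (P.gap_le_mesh (P.k_pos n))

theorem prev_gap_le_mesh {i : ℕ} (hi : i < P.k n) : P.t n i - P.t n (i - 1) ≤ P.mesh n := by
  rcases i with _ | i
  · simpa using (P.mesh_pos n).le
  · simpa using P.gap_le_mesh (i := i) (by omega)

variable (n) in
theorem biUnion_Ioc_eq :
    ⋃ i ∈ Finset.range (P.k n), Ioc (P.t n i) (P.t n (i + 1)) = Ioc r T := by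
  have h := (P.monotone_t_min n).biUnion_Ico_Ioc_map_succ 0 (P.k n)
  simp only [Nat.zero_le, min_eq_left, min_self, P.left, P.right] at h
  rw [← h]
  ext u
  simp only [mem_iUnion, Finset.mem_range, Set.mem_Ico, Nat.zero_le, true_and, exists_prop,
    Order.succ_eq_add_one]
  exact exists_congr fun i => and_congr_right fun hi => by
    rw [min_eq_left hi.le, min_eq_left hi]

variable (n) in
theorem pairwiseDisjoint_Ioc :
    (Finset.range (P.k n) : Set ℕ).PairwiseDisjoint fun i => Ioc (P.t n i) (P.t n (i + 1)) := by
  intro i hi j hj hij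
  have h := (P.monotone_t_min n).pairwise_disjoint_on_Ioc_succ hij
  simp only [Finset.coe_range, Set.mem_Iio] at hi hj
  simpa only [Function.onFun, Order.succ_eq_add_one, min_eq_left hi.le, min_eq_left hj.le,
    min_eq_left (show i + 1 ≤ P.k n from hi), min_eq_left (show j + 1 ≤ P.k n from hj)] using h

theorem idxLt_eq_of_mem_Ioc {i : ℕ} (hi : i < P.k n) {u : ℝ}
    (hu : u ∈ Ioc (P.t n i) (P.t n (i + 1))) : P.idxLt n u = i := by
  rw [idxLt, Nat.findGreatest_eq_iff]
  exact ⟨hi.le, fun _ => hu.1, fun m hm hmk =>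
    not_lt.2 (hu.2.trans (P.t_le_t (Nat.succ_le_of_lt hm) hmk))⟩

variable (n) in
/-- For `i = 0` the truncated `i - 1 = 0` makes the slope vanish, matching the constant piece of
the delayed interpolation on `[r, t₁]`. -/
noncomputable def slope {E : Type*} [NormedAddCommGroup E] [NormedSpace ℝ E] (x : ℝ → E)
    (i : ℕ) : E :=
  (P.t n (i + 1) - P.t n i)⁻¹ • (x (P.t n i) - x (P.t n (i - 1)))

theorem interpDeriv_eq_slope {E : Type*} [NormedAddCommGroup E] [NormedSpace ℝ E]
    (x : ℝ → E) {i : ℕ} (hi : i < P.k n) {u : ℝ} (hu : u ∈ Ioc (P.t n i) (P.t n (i + 1))) :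
    P.interpDeriv n x u = P.slope n x i := by
  rcases i with _ | i
  · simp [interpDeriv, slope, hu.2]
  · have hu1 : ¬ u ≤ P.t n 1 := ((P.t_le_t (by omega) hi.le).trans_lt hu.1).not_ge
    rw [interpDeriv, if_neg hu1, P.idxLt_eq_of_mem_Ioc hi hu, slope]

variable (n) in
theorem setLIntegral_enorm_interpDeriv_rpow_le {E : Type*} [NormedAddCommGroup E]
    [NormedSpace ℝ E] (x : ℝ → E) {s t : ℝ} (hs : r ≤ s) (ht : t ≤ T) (q : ℝ) :
    ∫⁻ u in Ioc s t, ‖P.interpDeriv n x u‖ₑ ^ q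
      ≤ ∑ i ∈ Finset.range (P.k n),
          volume.restrict (Ioc s t) (Ioc (P.t n i) (P.t n (i + 1))) * ‖P.slope n x i‖ₑ ^ q := by
  refine lintegral_le_sum_measure_mul_of_ae_le (fun _ _ => measurableSet_Ioc)
    (ae_restrict_of_forall_mem measurableSet_Ioc fun u hu => ?_)
  have hu' : u ∈ ⋃ i ∈ Finset.range (P.k n), Ioc (P.t n i) (P.t n (i + 1)) :=
    P.biUnion_Ioc_eq n ▸ ⟨hs.trans_lt hu.1, hu.2.trans ht⟩
  obtain ⟨i, hi, hui⟩ := mem_iUnion₂.1 hu'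
  exact ⟨i, hi, hui, by rw [P.interpDeriv_eq_slope x (Finset.mem_range.1 hi) hui]⟩

variable (n) in
theorem sum_volume_restrict_Ioc_le (s t : ℝ) :
    ∑ i ∈ Finset.range (P.k n), volume.restrict (Ioc s t) (Ioc (P.t n i) (P.t n (i + 1)))
      ≤ ENNReal.ofReal (t - s) := by
  calc _ ≤ volume.restrict (Ioc s t) univ :=
        sum_measure_le_measure_univ (fun _ _ => measurableSet_Ioc.nullMeasurableSet)
          (P.pairwiseDisjoint_Ioc n).aedisjoint
    _ = ENNReal.ofReal (t - s) := by rw [Measure.restrict_apply_univ, Real.volume_Ioc]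

variable {P} in
theorem Balanced.pos {c : ℝ} (hbal : P.Balanced c) : 0 < c := by
  have h := hbal 0 0 (P.k_pos 0)
  have hm := P.mesh_pos 0
  have hg := P.gap_pos (P.k_pos 0)
  exact pos_of_mul_pos_left (hm.trans_le h) hg.le

variable {P} in
theorem Balanced.inv_gap_rpow_mul_prev_gap_rpow_le {c : ℝ} (hbal : P.Balanced c) {i : ℕ}
    (hi : i < P.k n) {e : ℝ} (he : 0 ≤ e) :
    (P.t n (i + 1) - P.t n i)⁻¹ ^ e * (P.t n i - P.t n (i - 1)) ^ (e / 2)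
      ≤ c ^ e * P.mesh n ^ (-e / 2) := by
  have hc := hbal.pos
  have hm := P.mesh_pos n
  have hg := P.gap_pos hi
  have hinv : (P.t n (i + 1) - P.t n i)⁻¹ ≤ c / P.mesh n := by
    rw [inv_eq_one_div, div_le_div_iff₀ hg hm]
    linarith [hbal n i hi]
  calc (P.t n (i + 1) - P.t n i)⁻¹ ^ e * (P.t n i - P.t n (i - 1)) ^ (e / 2)
      ≤ (c / P.mesh n) ^ e * P.mesh n ^ (e / 2) := by
        have hprev : 0 ≤ P.t n i - P.t n (i - 1) := sub_nonneg.2 (P.t_pred_le hi.le)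
        gcongr
        exact P.prev_gap_le_mesh hi
    _ = c ^ e * P.mesh n ^ (-e / 2) := by
        rw [Real.div_rpow hc.le hm.le, div_mul_eq_mul_div, mul_div_assoc, ← Real.rpow_sub hm]
        ring_nf

end PartitionSeq

namespace IsBrownianMotion

variable {Ω Ω' : Type*} [MeasurableSpace Ω] [MeasurableSpace Ω'] {μ : Measure Ω}
  {μ' : Measure Ω'} {d : ℕ} {W : ℝ → Ω → Vec d} {r T : ℝ} {P : PartitionSeq r T} {n i : ℕ}

theorem aemeasurable_slope (hW : IsBrownianMotion μ W) (hr : 0 ≤ r) (hi : i < P.k n) :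
    AEMeasurable (fun ω => P.slope n (fun v => W v ω) i) μ :=
  (hW.aemeasurable_increment (P.t_nonneg hr (i := i - 1) (by omega))
    (P.t_pred_le hi.le)).fun_const_smul _

theorem lintegral_enorm_slope_rpow_le [IsProbabilityMeasure μ] [IsProbabilityMeasure μ']
    (hW : IsBrownianMotion μ W) (hr : 0 ≤ r) {c : ℝ} (hbal : P.Balanced c) (hi : i < P.k n)
    {Z : Ω' → Vec d} (hZind : iIndepFun (fun l ω' => Z ω' l) μ')
    (hZlaw : ∀ l, μ'.map (fun ω' => Z ω' l) = gaussianReal 0 1) {e : ℝ} (he : 0 ≤ e) :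
    ∫⁻ ω, ‖P.slope n (fun v => W v ω) i‖ₑ ^ e ∂μ
      ≤ ENNReal.ofReal (c ^ e) * ENNReal.ofReal (P.mesh n) ^ (-e / 2)
        * ∫⁻ ω', ‖Z ω'‖ₑ ^ e ∂μ' := by
  have hgap := (P.gap_pos hi).le
  have hprev_gap := sub_nonneg.2 (P.t_pred_le hi.le)
  simp only [PartitionSeq.slope, enorm_smul, ENNReal.mul_rpow_of_nonneg _ _ he]
  rw [lintegral_const_mul' _ _ (ENNReal.rpow_ne_top_of_nonneg he enorm_ne_top),
    hW.lintegral_enorm_increment_rpow (P.t_nonneg hr (by omega)) (P.t_pred_le hi.le) hZind hZlaw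
      he, ← mul_assoc]
  gcongr ?_ * _
  rw [Real.enorm_of_nonneg (inv_nonneg.2 hgap),
    ENNReal.ofReal_rpow_of_nonneg (inv_nonneg.2 hgap) he,
    ENNReal.ofReal_rpow_of_nonneg hprev_gap (by positivity),
    ENNReal.ofReal_rpow_of_pos (P.mesh_pos n),
    ← ENNReal.ofReal_mul (Real.rpow_nonneg (inv_nonneg.2 hgap) e),
    ← ENNReal.ofReal_mul (Real.rpow_nonneg hbal.pos.le e)]
  exact ENNReal.ofReal_le_ofReal (hbal.inv_gap_rpow_mul_prev_gap_rpow_le hi he)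

end IsBrownianMotion

theorem interpolated_bm_derivative_moment_general {d : ℕ} {Ω Ω' : Type*}
    [MeasurableSpace Ω] [MeasurableSpace Ω']
    (μ : Measure Ω) [IsProbabilityMeasure μ] (μ' : Measure Ω') [IsProbabilityMeasure μ']
    (r T : ℝ) (hr : 0 ≤ r)
    (P : PartitionSeq r T) (cT : ℝ) (hbal : P.Balanced cT)
    (W : ℝ → Ω → Vec d) (hW : IsBrownianMotion μ W)
    (Z : Ω' → Vec d)
    (hZindep : iIndepFun (fun l : Fin d => fun ω' => Z ω' l) μ')
    (hZgauss : ∀ l : Fin d, Measure.map (fun ω' => Z ω' l) μ' = gaussianReal 0 1)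
    (p q : ℝ) (hp : 1 ≤ p) (hq : 0 < q)
    (n : ℕ) (s t : ℝ) (hs : r ≤ s) (hst : s ≤ t) (ht : t ≤ T) :
    ∫⁻ ω, (∫⁻ u in Ioc s t, (‖P.interpDeriv n (fun v => W v ω) u‖₊ : ℝ≥0∞) ^ q) ^ p ∂μ
      ≤ (∫⁻ ω', (‖Z ω'‖₊ : ℝ≥0∞) ^ (p * q) ∂μ') * ENNReal.ofReal (cT ^ (p * q))
        * ENNReal.ofReal (P.mesh n) ^ (-(p * q) / 2) * ENNReal.ofReal ((t - s) ^ p) := by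
  set w : ℕ → ℝ≥0∞ := fun i => volume.restrict (Ioc s t) (Ioc (P.t n i) (P.t n (i + 1)))
  set C := ENNReal.ofReal (cT ^ (p * q)) * ENNReal.ofReal (P.mesh n) ^ (-(p * q) / 2)
    * ∫⁻ ω', ‖Z ω'‖ₑ ^ (p * q) ∂μ'
  have hmoment : ∀ i ∈ Finset.range (P.k n),
      ∫⁻ ω, (‖P.slope n (fun v => W v ω) i‖ₑ ^ q) ^ p ∂μ ≤ C := fun i hi => by
    simp only [← ENNReal.rpow_mul, mul_comm q p]
    exact hW.lintegral_enorm_slope_rpow_le hr hbal (Finset.mem_range.1 hi) hZindep hZgauss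
      (by positivity)
  calc ∫⁻ ω, (∫⁻ u in Ioc s t, (‖P.interpDeriv n (fun v => W v ω) u‖₊ : ℝ≥0∞) ^ q) ^ p ∂μ
      ≤ ∫⁻ ω, (∑ i ∈ Finset.range (P.k n), w i * ‖P.slope n (fun v => W v ω) i‖ₑ ^ q) ^ p ∂μ :=
        lintegral_mono fun ω => ENNReal.rpow_le_rpow
          (P.setLIntegral_enorm_interpDeriv_rpow_le n _ hs ht q) (by linarith)
    _ ≤ (∑ i ∈ Finset.range (P.k n), w i) ^ p * C :=
        lintegral_rpow_sum_mul_le w (fun i hi =>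
          (hW.aemeasurable_slope hr (Finset.mem_range.1 hi)).enorm.pow_const q) hp hmoment
    _ ≤ ENNReal.ofReal (t - s) ^ p * C := by
        gcongr
        exact P.sum_volume_restrict_Ioc_le n s t
    _ = _ := by
        rw [ENNReal.ofReal_rpow_of_nonneg (sub_nonneg.2 hst) (by linarith)]
        simp only [C, enorm_eq_nnnorm]
        ring

/-- explicit integral moment estimate for the piecewise-constant derivative of
the delayed linear interpolation of a Brownian motion along balanced partitions. -/
theorem interpolated_bm_derivative_moment {d : ℕ} {Ω Ω' : Type*}
    [MeasurableSpace Ω] [MeasurableSpace Ω']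
    (μ : Measure Ω) [IsProbabilityMeasure μ] (μ' : Measure Ω') [IsProbabilityMeasure μ']
    (r T : ℝ) (hr : 0 ≤ r) (hrT : r < T)
    (P : PartitionSeq r T) (cT : ℝ) (hcT : 1 ≤ cT) (hbal : P.Balanced cT)
    (W : ℝ → Ω → Vec d) (hW : IsBrownianMotion μ W)
    (Z : Ω' → Vec d)
    (hZindep : iIndepFun (fun l : Fin d => fun ω' => Z ω' l) μ')
    (hZgauss : ∀ l : Fin d, Measure.map (fun ω' => Z ω' l) μ' = gaussianReal 0 1)
    (p q : ℝ) (hp : 1 ≤ p) (hq : 0 < q)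
    (n : ℕ) (s t : ℝ) (hs : r ≤ s) (hst : s ≤ t) (ht : t ≤ T) :
    ∫⁻ ω, (∫⁻ u in Ioc s t, (‖P.interpDeriv n (fun v => W v ω) u‖₊ : ℝ≥0∞) ^ q) ^ p ∂μ
      ≤ (∫⁻ ω', (‖Z ω'‖₊ : ℝ≥0∞) ^ (p * q) ∂μ') * ENNReal.ofReal (cT ^ (p * q))
        * ENNReal.ofReal (P.mesh n) ^ (-(p * q) / 2) * ENNReal.ofReal ((t - s) ^ p) :=
  interpolated_bm_derivative_moment_general μ μ' r T hr P cT hbal W hW Z hZindep hZgauss p q hp hq n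
    s t hs hst ht
end

section
/- Let G be a non-anticipative functional on [r,t) × D([0,T],ℝ^m) that is twice vertically differentiable with d_∞-continuous second vertical derivative ∂_{xx}G. Then ∂_{xx}G is symmetric: ∂_{x_k x_l} G = ∂_{x_l x_k} G for all k,l ∈ {1,…,m}. -/
open MeasureTheory ProbabilityTheory Filter Set ENNReal

/-! Schwarz's lemma applies to the finite-dimensional map `h ↦ G s (vertShift x s h)`: vertical
shifts compose additively and preserve càdlàg paths, so vertical differentiability of `G` at
every shifted path makes this map differentiable everywhere, and its derivative
`h ↦ Gx s (vertShift x s h)` is differentiable at `0` with derivative `Gxx s x`. -/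

theorem vertShift_vertShift {E : Type*} [AddSemigroup E] (x : ℝ → E) (s : ℝ) (h e : E) :
    vertShift (vertShift x s h) s e = vertShift x s (h + e) := by
  funext u
  by_cases hsu : s ≤ u <;> simp [vertShift, hsu, add_assoc]

open Topology in
theorem Cadlag.vertShift {E : Type*} [TopologicalSpace E] [Add E] [ContinuousAdd E]
    {x : ℝ → E} (hx : Cadlag x) (s : ℝ) (h : E) :
    Cadlag (vertShift x s h) := by
  constructor
  · intro u
    by_cases hsu : s ≤ u
    · have hshift : ∀ v ∈ Ici u, _root_.vertShift x s h v = x v + h := fun v hv => by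
        simp [_root_.vertShift, hsu.trans hv]
      exact ((hx.1 u).add continuousWithinAt_const).congr hshift (hshift u self_mem_Ici)
    · have hunshifted : ∀ᶠ v in 𝓝[Ici u] u, _root_.vertShift x s h v = x v := by
        filter_upwards [nhdsWithin_le_nhds (Iio_mem_nhds (not_le.1 hsu))] with v hv
        simp [_root_.vertShift, not_le.2 (mem_Iio.1 hv)]
      exact (hx.1 u).congr_of_eventuallyEq hunshifted (hunshifted.self_of_nhdsWithin self_mem_Ici)
  · intro u
    obtain ⟨L, hL⟩ := hx.2 u
    by_cases hsu : s < u
    · refine ⟨L + h, (hL.add_const h).congr' ?_⟩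
      filter_upwards [mem_nhdsWithin_of_mem_nhds (Ici_mem_nhds hsu)] with v hv
      simp [_root_.vertShift, mem_Ici.1 hv]
    · refine ⟨L, hL.congr' ?_⟩
      filter_upwards [mem_of_superset self_mem_nhdsWithin (Iio_subset_Iio (not_lt.1 hsu))]
        with v hv
      simp [_root_.vertShift, not_le.2 (mem_Iio.1 hv)]

theorem HasVertDerivAt.hasFDerivAt_vertShift {E F : Type*} [NormedAddCommGroup E]
    [NormedSpace ℝ E] [NormedAddCommGroup F] [NormedSpace ℝ F] {G : ℝ → (ℝ → E) → F} {s : ℝ}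
    {x : ℝ → E} {h : E} {D : E →L[ℝ] F}
    (hG : HasVertDerivAt G s (vertShift x s h) D) :
    HasFDerivAt (fun e => G s (vertShift x s e)) D h := by
  have hD : HasFDerivAt (fun e => G s (vertShift x s (h + e))) D 0 := by
    simpa only [HasVertDerivAt, vertShift_vertShift] using hG
  simpa using (hasFDerivAt_comp_add_left (f := fun e => G s (vertShift x s e)) h).1 hD

theorem second_vertical_derivative_symmetric_general {m : ℕ} (r tmax : ℝ)
    (G : ℝ → (ℝ → Vec m) → ℝ)
    (Gx : ℝ → (ℝ → Vec m) → (Vec m →L[ℝ] ℝ))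
    (Gxx : ℝ → (ℝ → Vec m) → (Vec m →L[ℝ] Vec m →L[ℝ] ℝ))
    (hvert : ∀ s ∈ Ico r tmax, ∀ x : ℝ → Vec m, Cadlag x →
      HasVertDerivAt G s x (Gx s x))
    (hvert2 : ∀ s ∈ Ico r tmax, ∀ x : ℝ → Vec m, Cadlag x →
      HasVertDerivAt (fun s' y => Gx s' y) s x (Gxx s x)) :
    ∀ s ∈ Ico r tmax, ∀ x : ℝ → Vec m, Cadlag x →
      ∀ v w : Vec m, Gxx s x v w = Gxx s x w v := by
  intro s hs x hx
  exact second_derivative_symmetric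
    (fun h => (hvert s hs _ (hx.vertShift s h)).hasFDerivAt_vertShift) (hvert2 s hs x hx)

/-- symmetry of the second vertical derivative of a twice vertically
differentiable non-anticipative functional with `d_∞`-continuous second vertical
derivative (Schwarz's lemma). -/
theorem second_vertical_derivative_symmetric {m : ℕ} (r tmax T : ℝ)
    (hr : 0 ≤ r) (hrt : r < tmax) (htT : tmax ≤ T)
    (G : ℝ → (ℝ → Vec m) → ℝ)
    (Gx : ℝ → (ℝ → Vec m) → (Vec m →L[ℝ] ℝ))
    (Gxx : ℝ → (ℝ → Vec m) → (Vec m →L[ℝ] Vec m →L[ℝ] ℝ))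
    (hna : ∀ s ∈ Ico r tmax, ∀ x : ℝ → Vec m, Cadlag x → G s x = G s (stopAt x s))
    (hvert : ∀ s ∈ Ico r tmax, ∀ x : ℝ → Vec m, Cadlag x →
      HasVertDerivAt G s x (Gx s x))
    (hvert2 : ∀ s ∈ Ico r tmax, ∀ x : ℝ → Vec m, Cadlag x →
      HasVertDerivAt (fun s' y => Gx s' y) s x (Gxx s x))
    (hcont : DInftyContinuous r tmax T (fun s' y => Gxx s' y)) :
    ∀ s ∈ Ico r tmax, ∀ x : ℝ → Vec m, Cadlag x →
      ∀ v w : Vec m, Gxx s x v w = Gxx s x w v :=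
  second_vertical_derivative_symmetric_general r tmax G Gx Gxx hvert hvert2
end
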